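/- arXiv:2007.08185 — 7 statements merged into one kernel-verified Lean document; each statement's English description precedes it below -/
import Mathlib

section
/- Let E ∈ ℝ^{3×m} have rank 3 with singular value decomposition E = U_E Σ_E V_Eᵀ, where U_E is a 3×3 orthogonal matrix, V_E ∈ SO(m), and Σ_E ∈ ℝ^{3×m} has positive entries σ₁, σ₂, σ₃ on its main diagonal and zeros elsewhere. Let W = V_E W₀ V_Eᵀ where W₀ ∈ ℝ^{m×m} is diagonal with positive diagonal entries whose first three entries are w₁ = d₁/σ₁², w₂ = d₂/σ₂², w₃ = d₃/σ₃² for some d₁, d₂, d₃ > 0. Then the matrix K = E W Eᵀ is symmetric positive definite and satisfies K = U_E Δ U_Eᵀ with Δ = diag(d₁, d₂, d₃). -/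
open Matrix

/-! Since `V_Eᵀ V_E = 1`, the conjugation by `V_E` cancels and `K = U_E (Σ W₀ Σᵀ) U_Eᵀ`;
the rectangular diagonal `Σ` only sees the first three weights, so `Σ W₀ Σᵀ = diag(σᵢ² wᵢ) = Δ`.
Positive definiteness then follows because `U_E` is invertible. -/

theorem mul_diagonal_mul_transpose_of_rectDiagonal {R : Type*} [CommSemiring R] {n m : ℕ}
    (hnm : n ≤ m) (σ : Fin n → R) (S : Matrix (Fin n) (Fin m) R)
    (hS : ∀ (i : Fin n) (j : Fin m), S i j = if (j : ℕ) = (i : ℕ) then σ i else 0)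
    (w : Fin m → R) :
    S * diagonal w * Sᵀ = diagonal fun i => σ i ^ 2 * w (Fin.castLE hnm i) := by
  ext i j
  rw [mul_apply, Finset.sum_eq_single (Fin.castLE hnm i)]
  · by_cases hij : i = j
    · subst hij
      simp [hS, sq, mul_comm, mul_left_comm]
    · have hval : (i : ℕ) ≠ j := fun h => hij (Fin.ext h)
      simp [hS, hval, hij]
  · intro k _ hk
    have hval : (k : ℕ) ≠ i := fun h => hk (Fin.ext h)
    simp [mul_diagonal, hS, hval]
  · exact fun h => absurd (Finset.mem_univ _) h

theorem posDef_mul_diagonal_mul_transpose {n : Type*} [Fintype n] [DecidableEq n]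
    {U : Matrix n n ℝ} (hU : Uᵀ * U = 1) {d : n → ℝ} (hd : ∀ i, 0 < d i) :
    (U * diagonal d * Uᵀ).PosDef := by
  have hinj : Function.Injective U.vecMul := by
    refine Function.LeftInverse.injective (g := fun y => y ᵥ* Uᵀ) fun x => ?_
    simp only [vecMul_vecMul, mul_eq_one_comm.mp hU, vecMul_one]
  simpa using (posDef_diagonal_iff.mpr hd).mul_mul_conjTranspose_same hinj

theorem wahba_K_posdef_eigendecomposition_general
    (m : ℕ) (hm : 3 ≤ m)
    (E : Matrix (Fin 3) (Fin m) ℝ)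
    (U_E : Matrix (Fin 3) (Fin 3) ℝ) (hU : U_Eᵀ * U_E = 1)
    (V_E : Matrix (Fin m) (Fin m) ℝ) (hV : V_Eᵀ * V_E = 1)
    (σ : Fin 3 → ℝ) (hσ : ∀ i, 0 < σ i)
    (Sg : Matrix (Fin 3) (Fin m) ℝ)
    (hSg : ∀ (i : Fin 3) (j : Fin m), Sg i j = if (j : ℕ) = (i : ℕ) then σ i else 0)
    (hSVD : E = U_E * Sg * V_Eᵀ)
    (w₀ : Fin m → ℝ)
    (d : Fin 3 → ℝ) (hd : ∀ i, 0 < d i)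
    (hw₀d : ∀ i : Fin 3, w₀ (Fin.castLE hm i) = d i / (σ i) ^ 2)
    (W : Matrix (Fin m) (Fin m) ℝ) (hW : W = V_E * Matrix.diagonal w₀ * V_Eᵀ)
    (K : Matrix (Fin 3) (Fin 3) ℝ) (hK : K = E * W * Eᵀ) :
    Kᵀ = K ∧ K.PosDef ∧ K = U_E * Matrix.diagonal d * U_Eᵀ := by
  have hweights : (fun i => σ i ^ 2 * w₀ (Fin.castLE hm i)) = d := by
    ext i
    rw [hw₀d, mul_div_cancel₀ _ (pow_ne_zero 2 (hσ i).ne')]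
  have hKeq : K = U_E * diagonal d * U_Eᵀ := by
    calc K = U_E * (Sg * ((V_Eᵀ * V_E) * diagonal w₀ * (V_Eᵀ * V_E)) * Sgᵀ) * U_Eᵀ := by
          simp only [hK, hW, hSVD, transpose_mul, transpose_transpose, Matrix.mul_assoc]
      _ = U_E * diagonal d * U_Eᵀ := by
          rw [hV, Matrix.one_mul, Matrix.mul_one,
            mul_diagonal_mul_transpose_of_rectDiagonal hm σ Sg hSg, hweights]
  have hpos : K.PosDef := hKeq ▸ posDef_mul_diagonal_mul_transpose hU hd
  exact ⟨hpos.isHermitian, hpos, hKeq⟩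

/-- Given an SVD `E = U_E Sg V_Eᵀ` of a rank-3 matrix `E ∈ ℝ^{3×m}`
(with `U_E` orthogonal, `V_E ∈ SO(m)`, `Sg` having positive entries `σᵢ` on its main
diagonal and zeros elsewhere), and `W = V_E W₀ V_Eᵀ` with `W₀` diagonal, positive
diagonal, whose first three diagonal entries are `wᵢ = dᵢ/σᵢ²` for `dᵢ > 0`,
the matrix `K = E W Eᵀ` is symmetric positive definite and `K = U_E diag(d₁,d₂,d₃) U_Eᵀ`. -/
theorem wahba_K_posdef_eigendecomposition
    (m : ℕ) (hm : 3 ≤ m)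
    (E : Matrix (Fin 3) (Fin m) ℝ) (hrank : E.rank = 3)
    (U_E : Matrix (Fin 3) (Fin 3) ℝ) (hU : U_Eᵀ * U_E = 1)
    (V_E : Matrix (Fin m) (Fin m) ℝ) (hV : V_Eᵀ * V_E = 1) (hVdet : V_E.det = 1)
    (σ : Fin 3 → ℝ) (hσ : ∀ i, 0 < σ i)
    (Sg : Matrix (Fin 3) (Fin m) ℝ)
    (hSg : ∀ (i : Fin 3) (j : Fin m), Sg i j = if (j : ℕ) = (i : ℕ) then σ i else 0)
    (hSVD : E = U_E * Sg * V_Eᵀ)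
    (w₀ : Fin m → ℝ) (hw₀pos : ∀ j, 0 < w₀ j)
    (d : Fin 3 → ℝ) (hd : ∀ i, 0 < d i)
    (hw₀d : ∀ i : Fin 3, w₀ (Fin.castLE hm i) = d i / (σ i) ^ 2)
    (W : Matrix (Fin m) (Fin m) ℝ) (hW : W = V_E * Matrix.diagonal w₀ * V_Eᵀ)
    (K : Matrix (Fin 3) (Fin 3) ℝ) (hK : K = E * W * Eᵀ) :
    Kᵀ = K ∧ K.PosDef ∧ K = U_E * Matrix.diagonal d * U_Eᵀ :=
  wahba_K_posdef_eigendecomposition_general m hm E U_E hU V_E hV σ hσ Sg hSg hSVD w₀ d hd hw₀d W hW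
    K hK
end

section
/- Let U_E be a 3×3 real orthogonal matrix and let a₁, a₂, a₃ denote the columns of the 3×3 identity matrix. For each i ∈ {1,2,3}, the matrix Qⁱ := 2 U_E aᵢ aᵢᵀ U_Eᵀ − I belongs to SO(3); moreover, for K = U_E diag(d₁, d₂, d₃) U_Eᵀ with d₁, d₂, d₃ > 0, each Qⁱ satisfies K (Qⁱ)ᵀ = Qⁱ K, i.e., each Qⁱ is a critical point of the map Q ↦ ⟨I − Q, K⟩ on SO(3). -/
/-!
Conjugating by `U_E`, `Qⁱ = U_E Dᵢ U_Eᵀ` where `Dᵢ` is the diagonal sign matrix with `+1` only in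
slot `i`, the half-turn about the `i`-th axis: it is symmetric, squares to `1` and has determinant
`(-1)² = 1`. Since `K` is diagonalised by the same `U_E` and diagonal matrices commute, `K` commutes
with `Qⁱ = (Qⁱ)ᵀ`.
-/

open Matrix

section Conjugation

variable {n R : Type*} [Fintype n] [DecidableEq n] [CommRing R] {U : Matrix n n R}

theorem Matrix.conj_mul_conj (hU : Uᵀ * U = 1) (A B : Matrix n n R) :
    U * A * Uᵀ * (U * B * Uᵀ) = U * (A * B) * Uᵀ := by
  simp only [Matrix.mul_assoc, ← Matrix.mul_assoc Uᵀ U, hU, Matrix.one_mul]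

theorem Matrix.conj_two_smul_sub_one (hU : Uᵀ * U = 1) (P : Matrix n n R) :
    U * ((2 : R) • P - 1) * Uᵀ = (2 : R) • (U * P * Uᵀ) - 1 := by
  rw [Matrix.mul_sub, Matrix.sub_mul, Matrix.mul_one, mul_eq_one_comm.mp hU, Matrix.mul_smul,
    Matrix.smul_mul]

theorem Matrix.transpose_conj_diagonal (U : Matrix n n R) (d : n → R) :
    (U * diagonal d * Uᵀ)ᵀ = U * diagonal d * Uᵀ := by
  rw [transpose_mul, transpose_mul, transpose_transpose, diagonal_transpose, Matrix.mul_assoc]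

theorem Matrix.commute_conj_diagonal (hU : Uᵀ * U = 1) (d e : n → R) :
    Commute (U * diagonal d * Uᵀ) (U * diagonal e * Uᵀ) := by
  rw [Commute, SemiconjBy, conj_mul_conj hU, conj_mul_conj hU, (commute_diagonal d e).eq]

end Conjugation

section AxisSigns

variable {n R : Type*} [DecidableEq n] [CommRing R]

def axisSigns (i j : n) : R := if j = i then 1 else -1

theorem diagonal_axisSigns_mul_self [Fintype n] (i : n) :
    diagonal (axisSigns i) * diagonal (axisSigns i) = (1 : Matrix n n R) := by
  rw [diagonal_mul_diagonal, ← diagonal_one]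
  congr 1
  funext j
  by_cases h : j = i <;> simp [axisSigns, h]

theorem prod_axisSigns [Fintype n] (i : n) :
    ∏ j, (axisSigns i j : R) = (-1) ^ (Fintype.card n - 1) := by
  have h_off (j : n) (hj : j ∈ ({i}ᶜ : Finset n)) : (axisSigns i j : R) = -1 :=
    if_neg (by simpa using hj)
  rw [Fintype.prod_eq_mul_prod_compl i, Finset.prod_congr rfl h_off, Finset.prod_const,
    Finset.card_compl, Finset.card_singleton, axisSigns, if_pos rfl, one_mul]

theorem diagonal_axisSigns [Fintype n] (i : n) :
    diagonal (axisSigns i) = (2 : R) • vecMulVec (Pi.single i (1 : R)) (Pi.single i 1) - 1 := by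
  rw [← single_eq_single_vecMulVec_single, ← diagonal_single, ← diagonal_smul, ← diagonal_one,
    diagonal_sub]
  congr 1
  funext j
  by_cases h : j = i <;> norm_num [axisSigns, h]

end AxisSigns

theorem wahba_nontrivial_critical_points_general
    (U_E : Matrix (Fin 3) (Fin 3) ℝ) (hU : U_Eᵀ * U_E = 1)
    (d : Fin 3 → ℝ)
    (K : Matrix (Fin 3) (Fin 3) ℝ) (hK : K = U_E * Matrix.diagonal d * U_Eᵀ)
    (a : Fin 3 → Fin 3 → ℝ) (ha : ∀ i j, a i j = (1 : Matrix (Fin 3) (Fin 3) ℝ) j i)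
    (Q : Fin 3 → Matrix (Fin 3) (Fin 3) ℝ)
    (hQ : ∀ i, Q i = (2 : ℝ) • (U_E * Matrix.vecMulVec (a i) (a i) * U_Eᵀ) - 1) :
    ∀ i : Fin 3, ((Q i)ᵀ * Q i = 1 ∧ (Q i).det = 1) ∧ K * (Q i)ᵀ = Q i * K := by
  intro i
  have ha_i : a i = Pi.single i 1 := funext fun j => by rw [ha, one_apply, Pi.single_apply]
  have hQ_i : Q i = U_E * diagonal (axisSigns i) * U_Eᵀ := by
    rw [hQ, ha_i, diagonal_axisSigns, conj_two_smul_sub_one hU]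
  have hQ_symm : (Q i)ᵀ = Q i := hQ_i ▸ transpose_conj_diagonal U_E _
  refine ⟨⟨?_, ?_⟩, ?_⟩
  · rw [hQ_symm, hQ_i, conj_mul_conj hU, diagonal_axisSigns_mul_self, Matrix.mul_one,
      mul_eq_one_comm.mp hU]
  · rw [hQ_i, det_conj_of_mul_eq_one (mul_eq_one_comm.mp hU) hU, det_diagonal, prod_axisSigns]
    norm_num
  · rw [hQ_symm, hQ_i, hK]
    exact commute_conj_diagonal hU d _

/-- For a 3×3 orthogonal matrix `U_E`, with `aᵢ` the columns of the
identity matrix, each `Qⁱ = 2 U_E aᵢ aᵢᵀ U_Eᵀ − I` belongs to SO(3), and for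
`K = U_E diag(d₁,d₂,d₃) U_Eᵀ` with `dᵢ > 0`, each `Qⁱ` satisfies `K (Qⁱ)ᵀ = Qⁱ K`,
i.e. each `Qⁱ` is a critical point of `Q ↦ ⟨I − Q, K⟩` on SO(3). -/
theorem wahba_nontrivial_critical_points
    (U_E : Matrix (Fin 3) (Fin 3) ℝ) (hU : U_Eᵀ * U_E = 1)
    (d : Fin 3 → ℝ) (hd : ∀ i, 0 < d i)
    (K : Matrix (Fin 3) (Fin 3) ℝ) (hK : K = U_E * Matrix.diagonal d * U_Eᵀ)
    (a : Fin 3 → Fin 3 → ℝ) (ha : ∀ i j, a i j = (1 : Matrix (Fin 3) (Fin 3) ℝ) j i)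
    (Q : Fin 3 → Matrix (Fin 3) (Fin 3) ℝ)
    (hQ : ∀ i, Q i = (2 : ℝ) • (U_E * Matrix.vecMulVec (a i) (a i) * U_Eᵀ) - 1) :
    ∀ i : Fin 3, ((Q i)ᵀ * Q i = 1 ∧ (Q i).det = 1) ∧ K * (Q i)ᵀ = Q i * K :=
  wahba_nontrivial_critical_points_general U_E hU d K hK a ha Q hQ
end

section
/- Let K = U_E Δ U_Eᵀ where U_E is a 3×3 real orthogonal matrix and Δ = diag(d₁, d₂, d₃) with d₁, d₂, d₃ > 0 pairwise distinct (dᵢ ≠ dⱼ for i ≠ j). Let a₁, a₂, a₃ denote the columns of the 3×3 identity matrix and set Qⁱ := 2 U_E aᵢ aᵢᵀ U_Eᵀ − I for i = 1, 2, 3. Then for Q ∈ SO(3), the equation KQᵀ = QK holds if and only if Q ∈ {I, Q¹, Q², Q³}. -/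
/-!
Conjugating by `U_E` turns `K` into `D = diag(d)` and `Q` into `P = U_Eᵀ Q U_E ∈ SO(3)`.
From `D Pᵀ = P D` and `Pᵀ P = 1` one gets `P D P = D`, hence `P` commutes with `D²`; since the
`dᵢ` are positive and distinct, the `dᵢ²` are distinct, so `P` is diagonal. An orthogonal
diagonal matrix has entries `±1`, and `det P = 1` leaves `1` and the three `diag(±1)` with exactly
two `-1`s, which are the conjugates of the `Qⁱ`.
-/

open Matrix Function

theorem commute_mul_self_of_mul_eq_mul {M : Type*} [Monoid M] {p q d : M} (hqp : q * p = 1)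
    (h : d * q = p * d) : Commute p (d * d) := by
  have hd : d = p * d * p := by rw [← h, mul_assoc, hqp, mul_one]
  have hqd : q * d = d * p := by
    conv_lhs => rw [hd]
    rw [← mul_assoc, ← mul_assoc, hqp, one_mul]
  calc p * (d * d) = d * (q * d) := by rw [← mul_assoc, ← h, mul_assoc]
    _ = d * d * p := by rw [hqd, mul_assoc]

theorem eq_one_or_exists_eq_ite_of_prod_eq_one {R : Type*} [CommRing R] {s : Fin 3 → R}
    (hs : ∀ i, s i = 1 ∨ s i = -1) (hprod : s 0 * s 1 * s 2 = 1) :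
    s = 1 ∨ ∃ i, s = fun j => if j = i then 1 else -1 := by
  have hs' : s = ![s 0, s 1, s 2] := by ext j; fin_cases j <;> rfl
  rw [hs']
  rcases hs 0 with h0 | h0 <;> rcases hs 1 with h1 | h1 <;> rcases hs 2 with h2 | h2 <;>
    simp only [h0, h1, h2, mul_one, mul_neg, neg_neg] at hprod ⊢ <;>
    simp [funext_iff, Fin.forall_fin_succ, Fin.exists_fin_succ, hprod]

namespace Matrix

theorem star_eq_transpose {n R : Type*} [Star R] [TrivialStar R] (M : Matrix n n R) :
    star M = Mᵀ :=
  conjTranspose_eq_transpose_of_trivial M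

variable {n R : Type*} [DecidableEq n] [CommRing R]

variable (R) in
/-- `2 eᵢ eᵢᵀ - 1`; in dimension 3, the rotation by `π` about the `i`-th coordinate axis. -/
def axisReflection (i : n) : Matrix n n R :=
  diagonal fun j => if j = i then 1 else -1

theorem two_smul_vecMulVec_single_sub_one (i : n) :
    (2 : R) • vecMulVec (Pi.single i 1) (Pi.single i 1) - 1 = axisReflection R i := by
  rw [← single_eq_single_vecMulVec_single, ← diagonal_single]
  ext j k
  rcases eq_or_ne j k with rfl | hjk
  · by_cases hji : j = i <;> simp [axisReflection, hji]
    norm_num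
  · simp [axisReflection, hjk]

variable [Fintype n] [NoZeroDivisors R]

theorem isDiag_of_commute_diagonal {P : Matrix n n R} {e : n → R} (he : Injective e)
    (h : Commute P (diagonal e)) : P.IsDiag := by
  intro i j hij
  have hij' : P i j * e j = e i * P i j := by
    simpa only [mul_diagonal, diagonal_mul] using congr_fun₂ h i j
  have : P i j * (e j - e i) = 0 := by linear_combination hij'
  exact (mul_eq_zero.1 this).resolve_right (sub_ne_zero.2 (he.ne hij.symm))

theorem IsDiag.apply_eq_one_or_neg_one {P : Matrix n n R} (hd : P.IsDiag) (hP : Pᵀ * P = 1)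
    (i : n) : P i i = 1 ∨ P i i = -1 := by
  have := congr_fun₂ hP i i
  rw [← hd.diagonal_diag, diagonal_transpose, diagonal_mul_diagonal, one_apply_eq,
    diagonal_apply_eq, Matrix.diag_apply] at this
  exact mul_self_eq_one_iff.1 this

theorem diagonal_mul_transpose_eq_mul_diagonal_iff {d : Fin 3 → R}
    (hd : Injective fun i => d i * d i) {P : Matrix (Fin 3) (Fin 3) R} (hP : Pᵀ * P = 1)
    (hdet : P.det = 1) :
    diagonal d * Pᵀ = P * diagonal d ↔ P = 1 ∨ ∃ i, P = axisReflection R i := by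
  constructor
  · intro h
    have hdiag : P.IsDiag := isDiag_of_commute_diagonal hd <| by
      simpa only [diagonal_mul_diagonal] using commute_mul_self_of_mul_eq_mul hP h
    rw [← hdiag.diagonal_diag, det_diagonal, Fin.prod_univ_three] at hdet
    rw [← hdiag.diagonal_diag]
    simp only [axisReflection, ← diagonal_one, diagonal_injective.eq_iff]
    exact eq_one_or_exists_eq_ite_of_prod_eq_one (hdiag.apply_eq_one_or_neg_one hP) hdet
  · rintro (rfl | ⟨i, rfl⟩)
    · simp
    · simp only [axisReflection, diagonal_transpose, diagonal_mul_diagonal, mul_comm]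

end Matrix

/-- For `K = U_E diag(d₁,d₂,d₃) U_Eᵀ` with `U_E` orthogonal and
`d₁,d₂,d₃ > 0` pairwise distinct, and `Qⁱ = 2 U_E aᵢ aᵢᵀ U_Eᵀ − I` (with `aᵢ` the
columns of the identity), a matrix `Q ∈ SO(3)` satisfies `K Qᵀ = Q K` if and only
if `Q ∈ {I, Q¹, Q², Q³}`. -/
theorem wahba_critical_points_characterization
    (U_E : Matrix (Fin 3) (Fin 3) ℝ) (hU : U_Eᵀ * U_E = 1)
    (d : Fin 3 → ℝ) (hd : ∀ i, 0 < d i)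
    (hdist : ∀ i j : Fin 3, i ≠ j → d i ≠ d j)
    (K : Matrix (Fin 3) (Fin 3) ℝ) (hK : K = U_E * Matrix.diagonal d * U_Eᵀ)
    (a : Fin 3 → Fin 3 → ℝ) (ha : ∀ i j, a i j = (1 : Matrix (Fin 3) (Fin 3) ℝ) j i)
    (Qc : Fin 3 → Matrix (Fin 3) (Fin 3) ℝ)
    (hQc : ∀ i, Qc i = (2 : ℝ) • (U_E * Matrix.vecMulVec (a i) (a i) * U_Eᵀ) - 1)
    (Q : Matrix (Fin 3) (Fin 3) ℝ) (hQ : Qᵀ * Q = 1) (hQdet : Q.det = 1) :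
    K * Qᵀ = Q * K ↔ (Q = 1 ∨ ∃ i : Fin 3, Q = Qc i) := by
  have hd2 : Injective fun i => d i * d i := fun i j hij =>
    by_contra fun hne => hdist i j hne ((mul_self_inj (hd i).le (hd j).le).1 hij)
  have ha' : ∀ i, a i = Pi.single i 1 := fun i => funext fun j => by
    rw [ha, one_apply, Pi.single_apply]
  let Φ := Unitary.conjStarAlgAut ℝ _
    (⟨U_E, mem_unitaryGroup_iff'.2 hU⟩ : unitaryGroup (Fin 3) ℝ)
  have hΦ : ∀ X, Φ X = U_E * X * U_Eᵀ := fun _ => rfl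
  have hΦt : ∀ X, (Φ X)ᵀ = Φ Xᵀ := fun X => by
    rw [← star_eq_transpose, ← star_eq_transpose, map_star]
  obtain ⟨P, rfl⟩ : ∃ P, Φ P = Q := EquivLike.surjective Φ Q
  have hK' : K = Φ (diagonal d) := hK
  have hQc' : ∀ i, Qc i = Φ (axisReflection ℝ i) := fun i => by
    rw [hQc, ← two_smul_vecMulVec_single_sub_one, map_sub, map_smul, map_one, ha', hΦ]
  have hP : Pᵀ * P = 1 := EquivLike.injective Φ (by rw [map_mul, ← hΦt, hQ, map_one])
  have hPdet : P.det = 1 := by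
    rwa [hΦ, det_conj_of_mul_eq_one (mul_eq_one_comm.1 hU) hU] at hQdet
  rw [hK', hΦt, ← map_mul, ← map_mul, (EquivLike.injective Φ).eq_iff,
    EmbeddingLike.map_eq_one_iff]
  simp only [hQc', (EquivLike.injective Φ).eq_iff]
  exact diagonal_mul_transpose_eq_mul_diagonal_iff hd2 hP hPdet
end

section
/- Let K be a 3×3 real symmetric positive definite matrix. Then for every Q ∈ SO(3), ⟨I − Q, K⟩ = trace(K) − trace(KQ) ≥ 0, with equality if and only if Q = I. Consequently the identity matrix is the unique global minimizer of the map Q ↦ ⟨I − Q, K⟩ on SO(3). -/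
/-!
For orthogonal `Q` and symmetric `K`, expanding the product gives
`tr((I - Q) K (I - Q)ᵀ) = 2 (tr K - tr(KQ))`. The `i`-th diagonal entry of `B K Bᵀ` is the
value of the quadratic form of `K` at the `i`-th row of `B`, so when `K` is positive definite
this trace is nonnegative and vanishes only for `B = 0`, i.e. `Q = I`.
-/

open Matrix

namespace Matrix

variable {m n R : Type*} [Fintype n]

section PosDef

variable [Ring R] [StarRing R]

lemma mul_mul_conjTranspose_apply_self (A : Matrix n n R) (B : Matrix m n R) (i : m) :
    (B * A * Bᴴ) i i = star (star (B i)) ⬝ᵥ (A *ᵥ star (B i)) := by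
  simp only [star_star, mul_apply, dotProduct, mulVec, Finset.sum_mul, Finset.mul_sum,
    conjTranspose_apply, Pi.star_apply, mul_assoc]
  exact Finset.sum_comm

variable [PartialOrder R]

lemma PosDef.mul_mul_conjTranspose_apply_self_eq_zero_iff {A : Matrix n n R} (hA : A.PosDef)
    (B : Matrix m n R) (i : m) : (B * A * Bᴴ) i i = 0 ↔ B i = 0 := by
  refine ⟨fun h ↦ ?_, fun h ↦ by simp [mul_mul_conjTranspose_apply_self, h]⟩
  by_contra hBi
  have := hA.dotProduct_mulVec_pos (x := star (B i)) (star_ne_zero.mpr hBi)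
  rw [← mul_mul_conjTranspose_apply_self, h] at this
  exact this.false

lemma PosDef.trace_mul_mul_conjTranspose_eq_zero_iff [Fintype m] [IsOrderedAddMonoid R]
    {A : Matrix n n R} (hA : A.PosDef) {B : Matrix m n R} :
    (B * A * Bᴴ).trace = 0 ↔ B = 0 := by
  have hBAB := hA.posSemidef.mul_mul_conjTranspose_same B
  simp only [trace, diag, Finset.sum_eq_zero_iff_of_nonneg fun i _ ↦ hBAB.diag_nonneg,
    Finset.mem_univ, true_implies, hA.mul_mul_conjTranspose_apply_self_eq_zero_iff]
  exact funext_iff.symm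

end PosDef

variable [CommRing R] {K Q : Matrix n n R}

lemma IsSymm.trace_transpose_mul (hK : K.IsSymm) (Q : Matrix n n R) :
    (Qᵀ * K).trace = (K * Q).trace := by
  rw [← trace_transpose, transpose_mul, transpose_transpose, hK.eq]

variable [DecidableEq n]

lemma IsSymm.trace_transpose_one_sub_mul (hK : K.IsSymm) (Q : Matrix n n R) :
    ((1 - Q)ᵀ * K).trace = K.trace - (K * Q).trace := by
  rw [transpose_sub, transpose_one, sub_mul, one_mul, trace_sub, hK.trace_transpose_mul]

lemma IsSymm.trace_one_sub_mul_mul_transpose_one_sub (hK : K.IsSymm) (hQ : Qᵀ * Q = 1) :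
    ((1 - Q) * K * (1 - Q)ᵀ).trace = 2 * (K.trace - (K * Q).trace) := by
  have hQK : (Q * K).trace = (K * Q).trace := trace_mul_comm Q K
  have hKQt : (K * Qᵀ).trace = (K * Q).trace := by
    rw [trace_mul_comm, hK.trace_transpose_mul]
  have hQKQt : (Q * K * Qᵀ).trace = K.trace := by
    rw [trace_mul_cycle, hQ, one_mul]
  simp only [transpose_sub, transpose_one, sub_mul, mul_sub, one_mul, mul_one, trace_sub,
    hQK, hKQt, hQKQt]
  ring

variable [LinearOrder R] [IsStrictOrderedRing R] [StarRing R] [TrivialStar R]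

lemma PosDef.trace_sub_trace_mul_nonneg (hK : K.PosDef) (hQ : Qᵀ * Q = 1) :
    0 ≤ K.trace - (K * Q).trace := by
  have h := (hK.posSemidef.mul_mul_conjTranspose_same (1 - Q)).trace_nonneg
  rw [conjTranspose_eq_transpose_of_trivial,
    (isHermitian_iff_isSymm.mp hK.isHermitian).trace_one_sub_mul_mul_transpose_one_sub hQ] at h
  linarith

lemma PosDef.trace_sub_trace_mul_eq_zero_iff (hK : K.PosDef) (hQ : Qᵀ * Q = 1) :
    K.trace - (K * Q).trace = 0 ↔ Q = 1 := by
  calc K.trace - (K * Q).trace = 0 ↔ ((1 - Q) * K * (1 - Q)ᴴ).trace = (0 : R) := by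
        rw [conjTranspose_eq_transpose_of_trivial,
          (isHermitian_iff_isSymm.mp hK.isHermitian).trace_one_sub_mul_mul_transpose_one_sub hQ,
          mul_eq_zero, or_iff_right two_ne_zero]
    _ ↔ 1 - Q = 0 := hK.trace_mul_mul_conjTranspose_eq_zero_iff
    _ ↔ Q = 1 := sub_eq_zero.trans eq_comm

end Matrix

theorem wahba_identity_unique_global_minimizer_general
    (K : Matrix (Fin 3) (Fin 3) ℝ) (hpd : K.PosDef) :
    (∀ Q : Matrix (Fin 3) (Fin 3) ℝ, Qᵀ * Q = 1 → Q.det = 1 →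
      ((1 - Q)ᵀ * K).trace = K.trace - (K * Q).trace ∧
      0 ≤ K.trace - (K * Q).trace ∧
      (K.trace - (K * Q).trace = 0 ↔ Q = 1)) ∧
    (∀ Q : Matrix (Fin 3) (Fin 3) ℝ, Qᵀ * Q = 1 → Q.det = 1 → Q ≠ 1 →
      ((1 - (1 : Matrix (Fin 3) (Fin 3) ℝ))ᵀ * K).trace < ((1 - Q)ᵀ * K).trace) := by
  have hK : K.IsSymm := isHermitian_iff_isSymm.mp hpd.isHermitian
  refine ⟨fun Q hQ _ ↦ ⟨hK.trace_transpose_one_sub_mul Q, hpd.trace_sub_trace_mul_nonneg hQ,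
    hpd.trace_sub_trace_mul_eq_zero_iff hQ⟩, fun Q hQ _ hne ↦ ?_⟩
  rw [sub_self, transpose_zero, zero_mul, trace_zero, hK.trace_transpose_one_sub_mul Q]
  exact (hpd.trace_sub_trace_mul_nonneg hQ).lt_of_ne'
    (mt (hpd.trace_sub_trace_mul_eq_zero_iff hQ).mp hne)

/-- For a 3×3 symmetric positive definite matrix `K` and any `Q ∈ SO(3)`,
`⟨I − Q, K⟩ = trace(K) − trace(KQ) ≥ 0`, with equality iff `Q = I`; consequently the
identity is the unique global minimizer of `Q ↦ ⟨I − Q, K⟩` on SO(3). -/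
theorem wahba_identity_unique_global_minimizer
    (K : Matrix (Fin 3) (Fin 3) ℝ) (hsym : Kᵀ = K) (hpd : K.PosDef) :
    (∀ Q : Matrix (Fin 3) (Fin 3) ℝ, Qᵀ * Q = 1 → Q.det = 1 →
      ((1 - Q)ᵀ * K).trace = K.trace - (K * Q).trace ∧
      0 ≤ K.trace - (K * Q).trace ∧
      (K.trace - (K * Q).trace = 0 ↔ Q = 1)) ∧
    (∀ Q : Matrix (Fin 3) (Fin 3) ℝ, Qᵀ * Q = 1 → Q.det = 1 → Q ≠ 1 →
      ((1 - (1 : Matrix (Fin 3) (Fin 3) ℝ))ᵀ * K).trace < ((1 - Q)ᵀ * K).trace) :=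
  wahba_identity_unique_global_minimizer_general K hpd
end

section
/- Let K = U_E diag(d₁, d₂, d₃) U_Eᵀ where U_E is a 3×3 real orthogonal matrix and d₁, d₂, d₃ > 0. Let i* ∈ {1,2,3} be an index with d_{i*} = min{d₁, d₂, d₃}, let a_{i*} be the i*-th column of the identity matrix, and set Q^{i*} := 2 U_E a_{i*} a_{i*}ᵀ U_Eᵀ − I. Then for every Q ∈ SO(3), ⟨I − Q, K⟩ ≤ 2(d₁ + d₂ + d₃ − d_{i*}), and equality holds at Q = Q^{i*}; i.e., the map Q ↦ ⟨I − Q, K⟩ attains its global maximum on SO(3) at Q^{i*}, with maximum value twice the sum of the two largest dᵢ. -/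
/-!
Conjugating by `U_E` turns `⟨I - Q, K⟩` into `∑ i, (1 - P i i) * d i` with `P = U_Eᵀ Q U_E` again
in SO(3). The diagonal entries of an orthogonal matrix lie in `[-1, 1]` and a rotation of `ℝ³` has
trace at least `-1`, so `∑ i, (1 + P i i) * d i ≥ d_{i*} ∑ i, (1 + P i i) ≥ 2 d_{i*}`. For
`Q = Q^{i*}` one gets `P = 2 a aᵀ - I`, the half-turn about the `i*`-th axis, where this is an
equality.
-/

open Matrix

namespace Matrix

variable {n α : Type*} [Fintype n] [DecidableEq n]

theorem adjugate_eq_transpose_of_det_eq_one [CommRing α] {R : Matrix n n α}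
    (hR : Rᵀ * R = 1) (hdet : R.det = 1) : R.adjugate = Rᵀ :=
  calc R.adjugate = R.adjugate * (R * Rᵀ) := by rw [mul_eq_one_comm.mp hR, mul_one]
    _ = Rᵀ := by rw [← Matrix.mul_assoc, adjugate_mul, hdet, one_smul, Matrix.one_mul]

theorem sum_sq_col_eq_one [CommRing α] {R : Matrix n n α} (hR : Rᵀ * R = 1) (j : n) :
    ∑ i, R i j ^ 2 = 1 := by
  simpa [mul_apply, sq] using congrFun (congrFun hR j) j

theorem sum_sq_row_eq_one [CommRing α] {R : Matrix n n α} (hR : Rᵀ * R = 1) (i : n) :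
    ∑ j, R i j ^ 2 = 1 := by
  have hRt : Rᵀᵀ * Rᵀ = 1 := by rw [transpose_transpose]; exact mul_eq_one_comm.mp hR
  simpa using sum_sq_col_eq_one hRt i

theorem abs_entry_le_one_of_transpose_mul_self_eq_one {R : Matrix n n ℝ} (hR : Rᵀ * R = 1)
    (i j : n) : |R i j| ≤ 1 := by
  rw [← sq_le_one_iff_abs_le_one, ← sum_sq_col_eq_one hR j]
  exact Finset.single_le_sum (fun k _ => sq_nonneg (R k j)) (Finset.mem_univ i)

theorem transpose_mul_conj_self_eq_one [CommRing α] {U Q : Matrix n n α} (hU : Uᵀ * U = 1)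
    (hQ : Qᵀ * Q = 1) : (Uᵀ * Q * U)ᵀ * (Uᵀ * Q * U) = 1 := by
  simp only [transpose_mul, transpose_transpose, Matrix.mul_assoc]
  rw [← Matrix.mul_assoc U, mul_eq_one_comm.mp hU, Matrix.one_mul, ← Matrix.mul_assoc Qᵀ, hQ,
    Matrix.one_mul, hU]

theorem det_conj_transpose [CommRing α] {U : Matrix n n α} (hU : Uᵀ * U = 1) (Q : Matrix n n α) :
    (Uᵀ * Q * U).det = Q.det := by
  rw [det_mul, det_mul, mul_right_comm, ← det_mul, hU, det_one, one_mul]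

theorem trace_transpose_mul_conj_diagonal [CommRing α] (M U : Matrix n n α) (d : n → α) :
    (Mᵀ * (U * diagonal d * Uᵀ)).trace = ∑ i, (Uᵀ * M * U) i i * d i := by
  rw [← trace_transpose, transpose_mul, transpose_transpose, transpose_mul, transpose_mul,
    transpose_transpose, diagonal_transpose, Matrix.mul_assoc, trace_mul_comm]
  rw [show diagonal d * Uᵀ * M * U = diagonal d * (Uᵀ * M * U) by simp only [Matrix.mul_assoc],
    trace_mul_comm]
  simp [trace, mul_diagonal]

theorem neg_one_le_trace_of_det_eq_one {R : Matrix (Fin 3) (Fin 3) ℝ} (hR : Rᵀ * R = 1)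
    (hdet : R.det = 1) : -1 ≤ R.trace := by
  have hadj := adjugate_eq_transpose_of_det_eq_one hR hdet
  rw [adjugate_fin_three] at hadj
  have c0 : R 1 1 * R 2 2 - R 1 2 * R 2 1 = R 0 0 := by simpa using congrFun (congrFun hadj 0) 0
  have c1 : R 0 0 * R 2 2 - R 0 2 * R 2 0 = R 1 1 := by simpa using congrFun (congrFun hadj 1) 1
  have c2 : R 0 0 * R 1 1 - R 0 1 * R 1 0 = R 2 2 := by simpa using congrFun (congrFun hadj 2) 2
  have col := sum_sq_col_eq_one hR
  have row := sum_sq_row_eq_one hR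
  simp only [Fin.sum_univ_three] at col row
  rw [trace_fin_three]
  -- Each cofactor identity `R i i = minor` yields `(1 + tr R) (1 + 2 R i i - tr R) = (skew entry)²`,
  -- and the three second factors add up to `3 - tr R`.
  have e0 : (1 + (R 0 0 + R 1 1 + R 2 2)) * (1 + R 0 0 - R 1 1 - R 2 2) = (R 2 1 - R 1 2) ^ 2 := by
    linear_combination col 0 - row 1 - row 2 - 2 * c0
  have e1 : (1 + (R 0 0 + R 1 1 + R 2 2)) * (1 + R 1 1 - R 0 0 - R 2 2) = (R 0 2 - R 2 0) ^ 2 := by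
    linear_combination col 1 - row 0 - row 2 - 2 * c1
  have e2 : (1 + (R 0 0 + R 1 1 + R 2 2)) * (1 + R 2 2 - R 0 0 - R 1 1) = (R 1 0 - R 0 1) ^ 2 := by
    linear_combination col 2 - row 0 - row 1 - 2 * c2
  by_contra! hlt
  have f0 : 1 + R 0 0 - R 1 1 - R 2 2 ≤ 0 := by nlinarith [sq_nonneg (R 2 1 - R 1 2)]
  have f1 : 1 + R 1 1 - R 0 0 - R 2 2 ≤ 0 := by nlinarith [sq_nonneg (R 0 2 - R 2 0)]
  have f2 : 1 + R 2 2 - R 0 0 - R 1 1 ≤ 0 := by nlinarith [sq_nonneg (R 1 0 - R 0 1)]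
  linarith

end Matrix

open Finset in
theorem sum_one_sub_mul_le {ι : Type*} [Fintype ι] {p d : ι → ℝ} {m : ℝ} (hp : ∀ i, -1 ≤ p i)
    (hsum : -1 ≤ ∑ i, p i) (hm : ∀ i, m ≤ d i) (hm0 : 0 ≤ m) :
    ∑ i, (1 - p i) * d i ≤ 2 * ∑ i, d i - (Fintype.card ι - 1) * m := by
  have hlower : (Fintype.card ι - 1) * m ≤ ∑ i, (1 + p i) * d i :=
    calc (Fintype.card ι - 1) * m ≤ (Fintype.card ι + ∑ i, p i) * m := by gcongr; linarith
      _ = ∑ i, (1 + p i) * m := by simp [sum_add_distrib, add_mul, sum_mul]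
      _ ≤ ∑ i, (1 + p i) * d i :=
        sum_le_sum fun i _ => mul_le_mul_of_nonneg_left (hm i) (by linarith [hp i])
  have hsplit : ∑ i, (1 - p i) * d i = 2 * ∑ i, d i - ∑ i, (1 + p i) * d i := by
    rw [mul_sum, ← sum_sub_distrib]
    exact sum_congr rfl fun i _ => by ring
  linarith

/-- For `K = U_E diag(d₁,d₂,d₃) U_Eᵀ` with `U_E` orthogonal and
`dᵢ > 0`, and `i*` an index achieving the minimum of the `dᵢ`, the map
`Q ↦ ⟨I − Q, K⟩` on SO(3) is bounded above by `2(d₁+d₂+d₃−d_{i*})`, and this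
bound is attained at `Q^{i*} = 2 U_E a_{i*} a_{i*}ᵀ U_Eᵀ − I`. -/
theorem wahba_global_maximum
    (U_E : Matrix (Fin 3) (Fin 3) ℝ) (hU : U_Eᵀ * U_E = 1)
    (d : Fin 3 → ℝ) (hd : ∀ i, 0 < d i)
    (K : Matrix (Fin 3) (Fin 3) ℝ) (hK : K = U_E * Matrix.diagonal d * U_Eᵀ)
    (istar : Fin 3) (hmin : ∀ j, d istar ≤ d j)
    (a : Fin 3 → ℝ) (ha : ∀ j, a j = (1 : Matrix (Fin 3) (Fin 3) ℝ) j istar)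
    (Qstar : Matrix (Fin 3) (Fin 3) ℝ)
    (hQstar : Qstar = (2 : ℝ) • (U_E * Matrix.vecMulVec a a * U_Eᵀ) - 1) :
    (∀ Q : Matrix (Fin 3) (Fin 3) ℝ, Qᵀ * Q = 1 → Q.det = 1 →
      ((1 - Q)ᵀ * K).trace ≤ 2 * (d 0 + d 1 + d 2 - d istar)) ∧
    ((1 - Qstar)ᵀ * K).trace = 2 * (d 0 + d 1 + d 2 - d istar) := by
  subst hK
  refine ⟨fun Q hQ hQdet => ?_, ?_⟩
  · have hconj : U_Eᵀ * (1 - Q) * U_E = 1 - U_Eᵀ * Q * U_E := by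
      simp [Matrix.mul_sub, Matrix.sub_mul, hU]
    have hP := transpose_mul_conj_self_eq_one hU hQ
    have hPdet := (det_conj_transpose hU Q).trans hQdet
    have hbound := sum_one_sub_mul_le (p := fun i => (U_Eᵀ * Q * U_E) i i)
      (fun i => neg_le_of_abs_le (abs_entry_le_one_of_transpose_mul_self_eq_one hP i i))
      (neg_one_le_trace_of_det_eq_one hP hPdet) hmin (hd istar).le
    rw [trace_transpose_mul_conj_diagonal, hconj]
    norm_num [Fin.sum_univ_three] at hbound ⊢
    linarith
  · have hconj : U_Eᵀ * (1 - Qstar) * U_E = (2 : ℝ) • (1 - vecMulVec a a) := by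
      have hvv : U_Eᵀ * (U_E * vecMulVec a a * U_Eᵀ) * U_E = vecMulVec a a := by
        simp only [Matrix.mul_assoc, hU, Matrix.mul_one, ← Matrix.mul_assoc U_Eᵀ, Matrix.one_mul]
      rw [hQstar, Matrix.mul_sub, Matrix.sub_mul, Matrix.mul_sub, Matrix.sub_mul, Matrix.mul_smul,
        Matrix.smul_mul, hvv, Matrix.mul_one, hU]
      module
    rw [trace_transpose_mul_conj_diagonal, hconj]
    fin_cases istar <;> simp [Fin.sum_univ_three, ha, vecMulVec_apply, one_apply] <;> ring
end

section
/- Let h > 0, n ∈ ℕ with n ≥ 1, E ∈ ℝ^{3×m}, and let (Ω_i)_{i=0}^N ⊂ ℝ³ and (R_i)_{i=0}^N ⊂ SO(3) satisfy the discrete attitude kinematics R_{i+1} = R_i exp((h/2)(Ω_{i+1} + Ω_i)^×). In the absence of measurement noise, let Ω_iᵐ = Ω_i for all i, and let U_iᵐ = R_iᵀ E whenever i mod n = 0. Define the propagated measurement matrices by Ũ_iᵐ = U_iᵐ if i mod n = 0 and Ũ_iᵐ = exp(−(h/2)(Ω_{i−1}ᵐ + Ω_iᵐ)^×) Ũ_{i−1}ᵐ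 otherwise. Then Ũ_iᵐ = R_iᵀ E for all i ∈ {0, 1, …, N}. -/
/-!
The increment `(h/2)(Ω_{i+1} + Ω_i)^×` is skew-symmetric, so transposing the kinematics gives
`R_{i+1}ᵀ = exp(-(h/2)(Ω_i + Ω_{i+1})^×) R_iᵀ`: the true `R_iᵀ E` obeys the same recursion as the
propagated measurements, and the two agree at every reset index `i % n = 0`. Induction on `i`.
-/

open Matrix

def hat (v : Fin 3 → ℝ) : Matrix (Fin 3) (Fin 3) ℝ :=
  !![0, -v 2, v 1; v 2, 0, -v 0; -v 1, v 0, 0]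

theorem hat_transpose (v : Fin 3 → ℝ) : (hat v)ᵀ = -hat v := by
  ext i j
  fin_cases i <;> fin_cases j <;> simp [hat]

theorem transpose_mul_exp_of_transpose_eq_neg {m 𝔸 : Type*} [Fintype m] [DecidableEq m]
    [CommRing 𝔸] [TopologicalSpace 𝔸] [IsTopologicalRing 𝔸] [Algebra ℚ 𝔸] [T2Space 𝔸]
    (R A : Matrix m m 𝔸) (hA : Aᵀ = -A) :
    (R * NormedSpace.exp A)ᵀ = NormedSpace.exp (-A) * Rᵀ := by
  rw [transpose_mul, ← exp_transpose, hA]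

theorem propagated_measurements_noise_free_general
    (mdim : ℕ) (h : ℝ) (n : ℕ) (N : ℕ)
    (E : Matrix (Fin 3) (Fin mdim) ℝ)
    (Ω : ℕ → Fin 3 → ℝ)
    (R : ℕ → Matrix (Fin 3) (Fin 3) ℝ)
    (hkin : ∀ i, i < N → R (i + 1) = R i * NormedSpace.exp ((h / 2) • hat (Ω (i + 1) + Ω i)))
    (Ωm : ℕ → Fin 3 → ℝ) (hΩm : ∀ i ≤ N, Ωm i = Ω i)
    (Um : ℕ → Matrix (Fin 3) (Fin mdim) ℝ)
    (hUm : ∀ i ≤ N, i % n = 0 → Um i = (R i)ᵀ * E)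
    (Ut : ℕ → Matrix (Fin 3) (Fin mdim) ℝ)
    (hUt0 : ∀ i ≤ N, i % n = 0 → Ut i = Um i)
    (hUt1 : ∀ i ≤ N, 0 < i → i % n ≠ 0 →
      Ut i = NormedSpace.exp (-((h / 2) • hat (Ωm (i - 1) + Ωm i))) * Ut (i - 1)) :
    ∀ i ≤ N, Ut i = (R i)ᵀ * E := by
  have hRt : ∀ k < N, (R (k + 1))ᵀ =
      NormedSpace.exp (-((h / 2) • hat (Ωm k + Ωm (k + 1)))) * (R k)ᵀ := by
    intro k hk
    rw [hkin k hk, hΩm k hk.le, hΩm (k + 1) hk, add_comm (Ω k)]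
    exact transpose_mul_exp_of_transpose_eq_neg _ _ <| by
      rw [transpose_smul, hat_transpose, smul_neg]
  intro i hi
  induction i with
  | zero => rw [hUt0 0 hi (Nat.zero_mod n), hUm 0 hi (Nat.zero_mod n)]
  | succ k ih =>
    by_cases hreset : (k + 1) % n = 0
    · rw [hUt0 _ hi hreset, hUm _ hi hreset]
    · rw [hUt1 (k + 1) hi k.succ_pos hreset, Nat.add_sub_cancel, ih (by omega), hRt k hi,
        Matrix.mul_assoc]

/-- Under the discrete attitude kinematics
`R_{i+1} = R_i exp((h/2)(Ω_{i+1}+Ω_i)^×)`, with noise-free measurements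
`Ω_iᵐ = Ω_i` and `U_iᵐ = R_iᵀ E` whenever `i mod n = 0`, the propagated
measurement matrices `Ũ_iᵐ` (equal to `U_iᵐ` when `i mod n = 0` and to
`exp(−(h/2)(Ω_{i−1}ᵐ+Ω_iᵐ)^×) Ũ_{i−1}ᵐ` otherwise) satisfy
`Ũ_iᵐ = R_iᵀ E` for all `i ∈ {0,…,N}`. -/
theorem propagated_measurements_noise_free
    (mdim : ℕ) (h : ℝ) (hh : 0 < h) (n : ℕ) (hn : 1 ≤ n) (N : ℕ)
    (E : Matrix (Fin 3) (Fin mdim) ℝ)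
    (Ω : ℕ → Fin 3 → ℝ)
    (R : ℕ → Matrix (Fin 3) (Fin 3) ℝ)
    (hSO3 : ∀ i ≤ N, (R i)ᵀ * R i = 1 ∧ (R i).det = 1)
    (hkin : ∀ i, i < N → R (i + 1) = R i * NormedSpace.exp ((h / 2) • hat (Ω (i + 1) + Ω i)))
    (Ωm : ℕ → Fin 3 → ℝ) (hΩm : ∀ i ≤ N, Ωm i = Ω i)
    (Um : ℕ → Matrix (Fin 3) (Fin mdim) ℝ)
    (hUm : ∀ i ≤ N, i % n = 0 → Um i = (R i)ᵀ * E)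
    (Ut : ℕ → Matrix (Fin 3) (Fin mdim) ℝ)
    (hUt0 : ∀ i ≤ N, i % n = 0 → Ut i = Um i)
    (hUt1 : ∀ i ≤ N, 0 < i → i % n ≠ 0 →
      Ut i = NormedSpace.exp (-((h / 2) • hat (Ωm (i - 1) + Ωm i))) * Ut (i - 1)) :
    ∀ i ≤ N, Ut i = (R i)ᵀ * E :=
  propagated_measurements_noise_free_general mdim h n N E Ω R hkin Ωm hΩm Um hUm Ut hUt0 hUt1
end

section
/- Let m > 0, l > 0, k_p > 0, h > 0 be real numbers with l ≠ m, let ω, s ∈ ℝ³, and define the filter update ω' := (1/(m+l))[(m−l)ω + k_p h s]. Then m(ω' − ω) − k_p h s = −l(ω' + ω), and consequently the discrete Lyapunov difference satisfies (1/2)(ω' + ω)ᵀ( m(ω' − ω) − k_p h s ) = −(l/2)‖ω' + ω‖² ≤ 0, with equality if and only if ω' + ω = 0. -/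
open RealInnerProductSpace

/-!
Clearing the denominator, the update reads `(m + l) ω' = (m - l) ω + k_p h s`; substituting this
for `k_p h s` turns the residual `m (ω' - ω) - k_p h s` into `-l (ω' + ω)`, whose inner product
with `ω' + ω` is `-l ‖ω' + ω‖²`.
-/

theorem smul_sub_sub_eq_neg_smul_add {R M : Type*} [CommRing R] [AddCommGroup M] [Module R M]
    {m l c : R} {ω s ω' : M}
    (h : (m + l) • ω' = (m - l) • ω + c • s) :
    m • (ω' - ω) - c • s = -(l • (ω' + ω)) := by
  rw [eq_sub_of_add_eq' h.symm]
  module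

theorem half_inner_neg_smul_self {E : Type*} [NormedAddCommGroup E] [InnerProductSpace ℝ E]
    (l : ℝ) (v : E) :
    (1 / 2) * ⟪v, -(l • v)⟫ = -(l / 2) * ‖v‖ ^ 2 := by
  rw [inner_neg_right, real_inner_smul_right, real_inner_self_eq_norm_sq]
  ring

section Dissipation

variable {E : Type*} [NormedAddCommGroup E]

theorem neg_half_mul_norm_sq_nonpos {l : ℝ} (hl : 0 ≤ l) (v : E) :
    -(l / 2) * ‖v‖ ^ 2 ≤ 0 :=
  mul_nonpos_of_nonpos_of_nonneg (by linarith) (sq_nonneg _)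

theorem neg_half_mul_norm_sq_eq_zero_iff {l : ℝ} (hl : l ≠ 0) (v : E) :
    -(l / 2) * ‖v‖ ^ 2 = 0 ↔ v = 0 := by
  simp [hl]

end Dissipation

theorem filter_lyapunov_difference_general
    (m l kp h : ℝ) (hm : 0 < m) (hl : 0 < l)
    (ω s ω' : EuclideanSpace ℝ (Fin 3))
    (hω' : ω' = (1 / (m + l)) • ((m - l) • ω + (kp * h) • s)) :
    m • (ω' - ω) - (kp * h) • s = -(l • (ω' + ω)) ∧
    (1 / 2) * ⟪ω' + ω, m • (ω' - ω) - (kp * h) • s⟫ = -(l / 2) * ‖ω' + ω‖ ^ 2 ∧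
    -(l / 2) * ‖ω' + ω‖ ^ 2 ≤ 0 ∧
    (-(l / 2) * ‖ω' + ω‖ ^ 2 = 0 ↔ ω' + ω = 0) := by
  have hresidual : m • (ω' - ω) - (kp * h) • s = -(l • (ω' + ω)) := by
    refine smul_sub_sub_eq_neg_smul_add ?_
    rw [hω', one_div, smul_inv_smul₀ (by positivity)]
  refine ⟨hresidual, ?_, neg_half_mul_norm_sq_nonpos hl.le _,
    neg_half_mul_norm_sq_eq_zero_iff hl.ne' _⟩
  rw [hresidual, half_inner_neg_smul_self]

/-- For the filter update `ω' = (1/(m+l))[(m−l)ω + k_p h s]` with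
`m, l, k_p, h > 0` and `l ≠ m`, one has `m(ω' − ω) − k_p h s = −l(ω' + ω)`, hence
the discrete Lyapunov difference satisfies
`(1/2)(ω'+ω)ᵀ(m(ω'−ω) − k_p h s) = −(l/2)‖ω'+ω‖² ≤ 0`, with equality iff
`ω' + ω = 0`. -/
theorem filter_lyapunov_difference
    (m l kp h : ℝ) (hm : 0 < m) (hl : 0 < l) (hkp : 0 < kp) (hh : 0 < h) (hlm : l ≠ m)
    (ω s ω' : EuclideanSpace ℝ (Fin 3))
    (hω' : ω' = (1 / (m + l)) • ((m - l) • ω + (kp * h) • s)) :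
    m • (ω' - ω) - (kp * h) • s = -(l • (ω' + ω)) ∧
    (1 / 2) * ⟪ω' + ω, m • (ω' - ω) - (kp * h) • s⟫ = -(l / 2) * ‖ω' + ω‖ ^ 2 ∧
    -(l / 2) * ‖ω' + ω‖ ^ 2 ≤ 0 ∧
    (-(l / 2) * ‖ω' + ω‖ ^ 2 = 0 ↔ ω' + ω = 0) :=
  filter_lyapunov_difference_general m l kp h hm hl ω s ω' hω'
end
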